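/- Fix n ≥ 1. Then: (i) 1 ∉ Q_0(V_n), and every x ∈ V_n with Q_0(x) = 0 may be written x = Q_0(y) + c·1 with y ∈ V_n and c ∈ F₂, so the Margolis homology of V_n with respect to Q_0 is one-dimensional, spanned by 1; (ii) for every m ≥ n+1, Q_m vanishes identically on V_n, so the Margolis homology of V_n with respect to Q_m is all of V_n. (Corollary 2.21 of the paper, remaining cases: H(z(n)/v_n; Q_0) ≅ F₂ and H(z(n)/v_n; Q_m) ≅ H_*(z(n)/v_n) for m ≥ n+1.) -/

import Mathlib

/-!
Let `F₂ := ZMod 2` and `A := MvPolynomial {i : ℕ // 1 ≤ i} F₂`, modeling the mod 2 dual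
Steenrod algebra, with Milnor primitives `Q m` as below.  For `n ≥ 1` let `Sn n ⊆ A` be the
`F₂`-subalgebra generated by `ξ₁², ξ₂, …, ξ_n`, and let `Vn n := S_n + S_n·ξ_{n+1}` be the set
of all elements `s + s' * ξ_{n+1}` with `s, s' ∈ S_n`; `Vn n` models `H_*(z(n)/v_n; F₂)`.

STATEMENT (Corollary 2.21, remaining cases): (i) `1 ∉ Q_0(V_n)`, and every `x ∈ V_n` with
`Q_0 x = 0` can be written `x = Q_0 y + c • 1` with `y ∈ V_n`, `c ∈ F₂`, so
`H(z(n)/v_n; Q_0) ≅ F₂` spanned by `1`; (ii) for every `m ≥ n + 1`, `Q_m` vanishes identically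
on `V_n`, so `H(z(n)/v_n; Q_m)` is all of `V_n`.
-/

open MvPolynomial

abbrev F₂ : Type := ZMod 2

/-- The mod 2 dual Steenrod algebra, modeled as a polynomial algebra on `ξ_i`, `i ≥ 1`. -/
abbrev A : Type := MvPolynomial {i : ℕ // 1 ≤ i} F₂

/-- The generators `ξ_k`, with the convention `ξ_0 = 1`. -/
noncomputable def ξ (k : ℕ) : A :=
  if h : 1 ≤ k then X (⟨k, h⟩ : {i : ℕ // 1 ≤ i}) else 1

/-- The Milnor primitive `Q_m`, as the unique `F₂`-derivation of `A` with
`Q_m (ξ_k) = ξ_{k-m-1} ^ (2 ^ (m+1))` for `k ≥ m + 1` and `Q_m (ξ_k) = 0` for `1 ≤ k ≤ m`. -/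
noncomputable def Q (m : ℕ) : Derivation F₂ A A :=
  MvPolynomial.mkDerivation F₂ fun i : {i : ℕ // 1 ≤ i} =>
    if m + 1 ≤ i.1 then ξ (i.1 - (m + 1)) ^ 2 ^ (m + 1) else 0

/-- The subalgebra `S_n = F₂[ξ₁², ξ₂, …, ξ_n] ⊆ A`, modeling `H_*(z(n); F₂)`. -/
noncomputable def Sn (n : ℕ) : Subalgebra F₂ A :=
  Algebra.adjoin F₂ ({ξ 1 ^ 2} ∪ {y : A | ∃ k : ℕ, 2 ≤ k ∧ k ≤ n ∧ y = ξ k})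

/-- `V_n = S_n + S_n · ξ_{n+1}` — all elements `s + s' * ξ_{n+1}` with `s, s' ∈ S_n` —
modeling `H_*(z(n)/v_n; F₂) ≅ F₂[ξ̄₁², ξ̄₂, …, ξ̄_n] ⊗ E(ξ̄_{n+1})`. -/
noncomputable def Vn (n : ℕ) : Set A :=
  {x : A | ∃ s ∈ Sn n, ∃ s' ∈ Sn n, x = s + s' * ξ (n + 1)}

/-!
As a `Q₀`-complex, `V_n ≅ ⨂_{k=1}^{n} F₂[ξ_k²] ⊗ E(ξ_{k+1})` with `Q₀ ξ_{k+1} = ξ_k²`, and each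
factor deformation retracts onto `F₂` via the homotopy `ξ_k² ↦ ξ_{k+1}`. Applying on each monomial
the homotopy of the first factor in which it is non-trivial gives a homotopy `h` of `V_n` with
`Q₀ h + h Q₀ = id - ε`, `ε` the constant term; so every cycle is a boundary plus a constant.
The constant `1` is not a boundary because `ξ₁` only occurs squared in `V_n`, so no monomial of
`Q₀ x` is constant. For `m > n`, `Q_m` kills the generators `ξ₁², ξ₂, …, ξ_{n+1}` of `V_n`.
-/

open scoped Pointwise

abbrev I : Type := {i : ℕ // 1 ≤ i}

/-- `gen j` is the index of `ξ_{j+1}`. -/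
def gen (j : ℕ) : I := ⟨j + 1, Nat.succ_pos j⟩

@[simp] lemma gen_inj {a b : ℕ} : gen a = gen b ↔ a = b := by
  simp [gen, Subtype.ext_iff]

lemma gen_surjective : Function.Surjective gen := fun i =>
  ⟨i.1 - 1, Subtype.ext (Nat.sub_add_cancel i.2)⟩

lemma exponent_ext {σ τ : I →₀ ℕ} (h : ∀ j, σ (gen j) = τ (gen j)) : σ = τ :=
  Finsupp.ext <| gen_surjective.forall.mpr h

lemma ξ_succ (j : ℕ) : ξ (j + 1) = X (gen j) := by
  rw [ξ, dif_pos (Nat.le_add_left 1 j)]; rfl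

lemma Q_X_gen (m j : ℕ) :
    Q m (X (gen j)) = if m ≤ j then ξ (j - m) ^ 2 ^ (m + 1) else 0 := by
  simp only [Q, mkDerivation_X, gen]
  congr 1
  · simp
  · congr 2; omega

lemma monomial_single_gen (j e : ℕ) :
    monomial (Finsupp.single (gen j) e) (1 : F₂) = ξ (j + 1) ^ e := by
  rw [ξ_succ, X_pow_eq_monomial]

section RestrictSupport

variable {σ R : Type*} [CommSemiring R]

lemma restrictSupport_union (s t : Set (σ →₀ ℕ)) :
    restrictSupport R (s ∪ t) = restrictSupport R s ⊔ restrictSupport R t := by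
  simp only [restrictSupport_eq_span, Set.image_union, Submodule.span_union]

noncomputable def restrictSupportSubalgebra (M : AddSubmonoid (σ →₀ ℕ)) :
    Subalgebra R (MvPolynomial σ R) :=
  (restrictSupport R (M : Set (σ →₀ ℕ))).toSubalgebra
    (by simpa using (monomial_mem_restrictSupport R (r := 1)).mpr (Or.inl M.zero_mem))
    (fun x y hx hy => by
      have hxy := Submodule.mul_mem_mul hx hy
      rw [← restrictSupport_add] at hxy
      exact restrictSupport_mono R (Set.add_subset_iff.mpr fun _ ha _ hb => M.add_mem ha hb) hxy)

end RestrictSupport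

def snExponents (n : ℕ) : AddSubmonoid (I →₀ ℕ) where
  carrier := {σ | σ (gen 0) % 2 = 0 ∧ ∀ j, n ≤ j → σ (gen j) = 0}
  add_mem' := by
    rintro σ τ ⟨hσ0, hσ⟩ ⟨hτ0, hτ⟩
    refine ⟨by simp only [Finsupp.add_apply]; omega, fun j hj => ?_⟩
    simp [hσ j hj, hτ j hj]
  zero_mem' := by simp

def vnExponents (n : ℕ) : Set (I →₀ ℕ) :=
  {σ | σ (gen 0) % 2 = 0 ∧ σ (gen n) ≤ 1 ∧ ∀ j, n < j → σ (gen j) = 0}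

lemma monomial_mem_Sn {n : ℕ} {σ : I →₀ ℕ} (hσ : σ ∈ snExponents n) :
    monomial σ (1 : F₂) ∈ Sn n := by
  rw [monomial_eq, C_1, one_mul]
  refine Subalgebra.prod_mem _ fun i _ => ?_
  obtain ⟨j, rfl⟩ := gen_surjective i
  show X (gen j) ^ σ (gen j) ∈ Sn n
  rw [← ξ_succ]
  rcases Nat.eq_zero_or_pos j with rfl | hj
  · have hsq : ξ (0 + 1) ^ 2 ∈ Sn n := Algebra.subset_adjoin (Set.mem_union_left _ rfl)
    have he : σ (gen 0) = 2 * (σ (gen 0) / 2) := by have := hσ.1; omega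
    rw [he, pow_mul]
    exact pow_mem hsq _
  · by_cases hjn : n ≤ j
    · rw [hσ.2 j hjn, pow_zero]
      exact one_mem _
    · have hξ : ξ (j + 1) ∈ Sn n :=
        Algebra.subset_adjoin (Set.mem_union_right _ ⟨j + 1, by omega, by omega, rfl⟩)
      exact pow_mem hξ _

lemma Sn_eq_restrictSupport (n : ℕ) (hn : 1 ≤ n) :
    Subalgebra.toSubmodule (Sn n) = restrictSupport F₂ (snExponents n : Set (I →₀ ℕ)) := by
  apply le_antisymm
  · suffices Sn n ≤ restrictSupportSubalgebra (snExponents n) from this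
    refine Algebra.adjoin_le ?_
    rintro _ (rfl | ⟨k, hk2, hkn, rfl⟩)
    · rw [← monomial_single_gen]
      refine (monomial_mem_restrictSupport F₂).mpr (Or.inl ⟨by simp, fun j hj => ?_⟩)
      simp [Finsupp.single_apply]
      omega
    · obtain ⟨j, rfl⟩ : ∃ j, k = j + 1 := ⟨k - 1, by omega⟩
      rw [← pow_one (ξ _), ← monomial_single_gen]
      refine (monomial_mem_restrictSupport F₂).mpr (Or.inl ⟨?_, fun i hi => ?_⟩)
      · simp [show j ≠ 0 by omega]
      · simp [Finsupp.single_apply]; omega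
  · rw [restrictSupport_eq_span, Submodule.span_le]
    rintro _ ⟨σ, hσ, rfl⟩
    exact monomial_mem_Sn hσ

lemma vnExponents_eq (n : ℕ) (hn : 1 ≤ n) :
    vnExponents n = (snExponents n : Set (I →₀ ℕ)) ∪
      ((snExponents n : Set (I →₀ ℕ)) + {(Finsupp.single (gen n) 1 : I →₀ ℕ)}) := by
  ext σ
  simp only [vnExponents, snExponents, Set.add_singleton, Set.mem_union, Set.mem_image,
    AddSubmonoid.coe_set_mk, AddSubsemigroup.coe_set_mk]
  constructor
  · rintro ⟨h0, hn1, hgt⟩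
    by_cases hσn : σ (gen n) = 0
    · exact Or.inl ⟨h0, fun j hj => by rcases hj.eq_or_lt with rfl | hj <;> simp_all⟩
    refine Or.inr ⟨σ - Finsupp.single (gen n) 1, ⟨?_, fun j hj => ?_⟩,
      tsub_add_cancel_of_le (Finsupp.single_le_iff.mpr (by omega))⟩
    · simp [show n ≠ 0 by omega, h0]
    · rcases hj.eq_or_lt with rfl | hj
      · simp; omega
      · simp [hj.ne, hgt j hj]
  · rintro (⟨h0, h⟩ | ⟨τ, ⟨h0, h⟩, rfl⟩)
    · exact ⟨h0, by simp [h n le_rfl], fun j hj => h j hj.le⟩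
    · refine ⟨?_, ?_, fun j hj => ?_⟩
      · simp [show n ≠ 0 by omega, h0]
      · simp [h n le_rfl]
      · simp [hj.ne, h j hj.le]

lemma Vn_eq_restrictSupport (n : ℕ) (hn : 1 ≤ n) :
    Vn n = restrictSupport F₂ (vnExponents n) := by
  have hξ : Submodule.span F₂ {ξ (n + 1)} =
      restrictSupport F₂ {(Finsupp.single (gen n) 1 : I →₀ ℕ)} := by
    rw [restrictSupport_eq_span, Set.image_singleton, monomial_single_gen, pow_one]
  ext x
  rw [vnExponents_eq n hn, restrictSupport_union, restrictSupport_add, ← hξ,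
    ← Sn_eq_restrictSupport n hn, SetLike.mem_coe, Submodule.mem_sup]
  simp only [Submodule.mem_mul_span_singleton, Subalgebra.mem_toSubmodule, Vn]
  constructor
  · rintro ⟨s, hs, s', hs', rfl⟩
    exact ⟨s, hs, _, ⟨s', hs', rfl⟩, rfl⟩
  · rintro ⟨s, hs, _, ⟨s', hs', rfl⟩, rfl⟩
    exact ⟨s, hs, s', hs', rfl⟩

lemma Q_ξ_of_le {m k : ℕ} (hk : k ≤ m) : Q m (ξ k) = 0 := by
  rcases k with _ | j
  · simp [ξ]
  · rw [ξ_succ, Q_X_gen, if_neg (by omega)]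

lemma Q_eq_zero_of_mem_Vn {n m : ℕ} (hm : n + 1 ≤ m) {x : A} (hx : x ∈ Vn n) :
    Q m x = 0 := by
  have hSn : Set.EqOn (Q m) (0 : Derivation F₂ A A) (Sn n) := by
    refine Derivation.eqOn_adjoin ?_
    rintro _ (rfl | ⟨k, -, hk, rfl⟩)
    · simp [sq, Q_ξ_of_le (show 1 ≤ m by omega)]
    · exact Q_ξ_of_le (by omega)
  obtain ⟨s, hs, s', hs', rfl⟩ := hx
  simp [hSn hs, hSn hs', Q_ξ_of_le hm]

/-- Replaces a factor `ξ_{j+2}` of a monomial by `ξ_{j+1}² = Q₀ ξ_{j+2}`. -/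
noncomputable def lower (j : ℕ) (σ : I →₀ ℕ) : I →₀ ℕ :=
  σ - Finsupp.single (gen (j + 1)) 1 + Finsupp.single (gen j) 2

noncomputable def raise (k : ℕ) (σ : I →₀ ℕ) : I →₀ ℕ :=
  σ - Finsupp.single (gen k) 2 + Finsupp.single (gen (k + 1)) 1

lemma lower_apply (j i : ℕ) (σ : I →₀ ℕ) :
    lower j σ (gen i) = σ (gen i) - (if j + 1 = i then 1 else 0) + (if j = i then 2 else 0) := by
  simp [lower, Finsupp.single_apply]

lemma raise_apply (k i : ℕ) (σ : I →₀ ℕ) :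
    raise k σ (gen i) = σ (gen i) - (if k = i then 2 else 0) + (if k + 1 = i then 1 else 0) := by
  simp [raise, Finsupp.single_apply]

lemma monomial_natCast (σ : I →₀ ℕ) (c : ℕ) :
    monomial σ (c : F₂) = if c % 2 = 1 then monomial σ 1 else 0 := by
  rw [← ZMod.natCast_mod]
  rcases Nat.mod_two_eq_zero_or_one c with h | h <;> simp [h]

lemma Q_zero_monomial {N : ℕ} {σ : I →₀ ℕ} (h0 : σ (gen 0) % 2 = 0)
    (hN : ∀ j, N < j → σ (gen j) = 0) :
    Q 0 (monomial σ 1) = ∑ j ∈ Finset.range N,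
      if σ (gen (j + 1)) % 2 = 1 then monomial (lower j σ) 1 else 0 := by
  have hsupp : σ.support ⊆ (Finset.range (N + 1)).image gen := by
    intro i hi
    obtain ⟨j, rfl⟩ := gen_surjective i
    exact Finset.mem_image_of_mem _ (Finset.mem_range.mpr <| by
      by_contra h; exact Finsupp.mem_support_iff.mp hi (hN j (by omega)))
  rw [Q, mkDerivation_monomial, one_smul, Finsupp.sum_of_support_subset σ hsupp _ (by simp),
    Finset.sum_image (fun _ _ _ _ h => gen_inj.mp h), Finset.sum_range_succ']
  simp only [monomial_natCast, ite_smul, zero_smul, if_neg (show ¬σ (gen 0) % 2 = 1 by omega),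
    add_zero]
  refine Finset.sum_congr rfl fun j _ => if_congr Iff.rfl ?_ rfl
  rw [if_pos (by simp [gen]), show (gen (j + 1) : ℕ) - (0 + 1) = j + 1 from rfl,
    ← monomial_single_gen, smul_eq_mul, monomial_mul, mul_one, lower, zero_add, pow_one]

section Homotopy

variable {n k : ℕ} {σ : I →₀ ℕ}

lemma lower_ne_zero (j : ℕ) (σ : I →₀ ℕ) : lower j σ ≠ 0 := fun h => by
  simpa [h] using lower_apply j j σ

lemma constantCoeff_Q_zero {x : A} (hx : x ∈ restrictSupport F₂ (vnExponents n)) :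
    constantCoeff (Q 0 x) = 0 := by
  rw [restrictSupport_eq_span] at hx
  induction hx using Submodule.span_induction with
  | mem _ hp =>
    obtain ⟨σ, hσ, rfl⟩ := hp
    rw [Q_zero_monomial hσ.1 hσ.2.2, map_sum]
    refine Finset.sum_eq_zero fun j _ => ?_
    split_ifs <;> simp [constantCoeff_monomial, lower_ne_zero]
  | zero => simp
  | add _ _ _ _ hx hy => simp [hx, hy]
  | smul _ _ _ hx => simp [hx]

lemma raise_lower (h : 1 ≤ σ (gen (k + 1))) : raise k (lower k σ) = σ :=
  exponent_ext fun i => by simp only [raise_apply, lower_apply]; split_ifs <;> subst_vars <;> omega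

lemma lower_raise (h : 2 ≤ σ (gen k)) : lower k (raise k σ) = σ :=
  exponent_ext fun i => by simp only [raise_apply, lower_apply]; split_ifs <;> subst_vars <;> omega

lemma lower_raise_comm (σ : I →₀ ℕ) {j : ℕ} (hkj : k < j) :
    lower j (raise k σ) = raise k (lower j σ) :=
  exponent_ext fun i => by simp only [raise_apply, lower_apply]; split_ifs <;> omega

/-- The monomial `σ` is not `1` in the tensor factor `F₂[ξ_{k+1}²] ⊗ E(ξ_{k+2})`: the odd part of
the exponent of `ξ_{k+2}` lies in this factor, its even part in the next one. -/
def Active (σ : I →₀ ℕ) (k : ℕ) : Prop :=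
  2 ≤ σ (gen k) ∨ σ (gen (k + 1)) % 2 = 1

lemma eq_zero_of_forall_not_active (h0 : σ (gen 0) % 2 = 0)
    (hbelow : ∀ j < k, ¬Active σ j) : (∀ j < k, σ (gen j) = 0) ∧ σ (gen k) % 2 = 0 := by
  induction k with
  | zero => exact ⟨by simp, h0⟩
  | succ k ih =>
    obtain ⟨hz, hk⟩ := ih fun j hj => hbelow j (by omega)
    have hk' := hbelow k (by omega)
    simp only [Active, not_or, not_le] at hk'
    refine ⟨fun j hj => ?_, by omega⟩
    rcases (Nat.lt_succ_iff.mp hj).lt_or_eq with hj | rfl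
    · exact hz j hj
    · omega

lemma forall_not_active_congr {τ : I →₀ ℕ} (h : ∀ j < k, τ (gen j) = σ (gen j))
    (hk : τ (gen k) % 2 = σ (gen k) % 2) (hbelow : ∀ j < k, ¬Active σ j) :
    ∀ j < k, ¬Active τ j := by
  intro j hj
  have := hbelow j hj
  simp only [Active, not_or, not_le] at this ⊢
  rw [h j hj]
  rcases (show j + 1 ≤ k by omega).lt_or_eq with hj' | hj'
  · rw [h (j + 1) hj']; exact this
  · subst hj'; omega

lemma exists_active (hσ : σ ∈ vnExponents n) (hne : σ ≠ 0) :
    ∃ k < n, Active σ k := by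
  by_contra! h
  obtain ⟨hz, hn⟩ := eq_zero_of_forall_not_active hσ.1 h
  refine hne (exponent_ext fun j => ?_)
  rcases lt_trichotomy j n with hj | rfl | hj
  · exact hz j hj
  · have := hσ.2.1; simp; omega
  · exact hσ.2.2 j hj

open Classical in
/-- The homotopy `ξ_{k+1}² ↦ ξ_{k+2}` of the first active factor `k`. -/
noncomputable def homotopyMonomial (n : ℕ) (σ : I →₀ ℕ) : A :=
  if h : ∃ k < n, Active σ k then
    if σ (gen (Nat.find h + 1)) % 2 = 0 then monomial (raise (Nat.find h) σ) 1 else 0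
  else 0

noncomputable def homotopy (n : ℕ) : A →ₗ[F₂] A :=
  (basisMonomials I F₂).constr F₂ (homotopyMonomial n)

lemma homotopy_monomial (n : ℕ) (σ : I →₀ ℕ) :
    homotopy n (monomial σ 1) = homotopyMonomial n σ :=
  (basisMonomials I F₂).constr_basis F₂ (homotopyMonomial n) σ

lemma homotopyMonomial_zero (n : ℕ) : homotopyMonomial n 0 = 0 := by
  rw [homotopyMonomial, dif_neg]
  simp [Active]

lemma homotopyMonomial_eq (hk : k < n) (hbelow : ∀ j < k, ¬Active σ j)
    (hact : Active σ k) :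
    homotopyMonomial n σ =
      if σ (gen (k + 1)) % 2 = 0 then monomial (raise k σ) 1 else 0 := by
  classical
  have h : ∃ k < n, Active σ k := ⟨k, hk, hact⟩
  have hfind : Nat.find h = k :=
    (Nat.find_eq_iff h).mpr ⟨⟨hk, hact⟩, fun j hj hj' => hbelow j hj hj'.2⟩
  rw [homotopyMonomial, dif_pos h]
  simp only [hfind]

lemma raise_mem_vnExponents (hσ : σ ∈ vnExponents n) (hk : k < n)
    (heven : σ (gen (k + 1)) % 2 = 0) : raise k σ ∈ vnExponents n := by
  obtain ⟨h0, hn, hgt⟩ := hσ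
  refine ⟨?_, ?_, fun j hj => ?_⟩ <;> rw [raise_apply]
  · rw [if_neg k.succ_ne_zero]; split_ifs <;> omega
  · split_ifs <;> subst_vars <;> omega
  · rw [hgt j hj]; split_ifs <;> omega

lemma homotopyMonomial_lower_of_lt (hk : k < n) (hbelow : ∀ j < k, ¬Active σ j)
    (hact : Active σ k) {j : ℕ} (hkj : k < j) :
    homotopyMonomial n (lower j σ) =
      if σ (gen (k + 1)) % 2 = 0 then monomial (raise k (lower j σ)) 1 else 0 := by
  have hlow : ∀ i ≤ k, lower j σ (gen i) = σ (gen i) := fun i hi => by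
    simp only [lower_apply]; split_ifs <;> omega
  have hpar : lower j σ (gen (k + 1)) % 2 = σ (gen (k + 1)) % 2 := by
    simp only [lower_apply]; split_ifs <;> omega
  rw [homotopyMonomial_eq hk, hpar]
  · exact forall_not_active_congr (fun i hi => hlow i hi.le) (by rw [hlow k le_rfl]) hbelow
  · simpa only [Active, hlow k le_rfl, hpar] using hact

lemma homotopy_Q_zero_of_odd (hσ : σ ∈ vnExponents n) (hk : k < n)
    (hbelow : ∀ j < k, ¬Active σ j) (hodd : σ (gen (k + 1)) % 2 = 1) :
    homotopy n (Q 0 (monomial σ 1)) = monomial σ 1 := by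
  obtain ⟨hz, hke⟩ := eq_zero_of_forall_not_active hσ.1 hbelow
  rw [Q_zero_monomial hσ.1 hσ.2.2, map_sum, Finset.sum_eq_single k]
  · have hlow : ∀ i < k, lower k σ (gen i) = σ (gen i) := fun i hi => by
      simp only [lower_apply]; split_ifs <;> omega
    rw [if_pos hodd, homotopy_monomial, homotopyMonomial_eq hk, if_pos, raise_lower (by omega)]
    · simp only [lower_apply]; split_ifs <;> omega
    · refine forall_not_active_congr hlow ?_ hbelow
      simp only [lower_apply]; split_ifs <;> omega
    · left; simp only [lower_apply]; split_ifs <;> omega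
  · intro j _ hjk
    split_ifs with hj
    · have hkj : k < j := by
        by_contra! hjk'
        rcases (show j + 1 ≤ k by omega).lt_or_eq with h | h
        · rw [hz _ h] at hj; omega
        · subst h; omega
      rw [homotopy_monomial, homotopyMonomial_lower_of_lt hk hbelow (Or.inr hodd) hkj,
        if_neg (by omega)]
    · exact map_zero _
  · intro h; exact absurd (Finset.mem_range.mpr hk) h

lemma Q_zero_homotopy_add_homotopy_Q_zero_of_even (hσ : σ ∈ vnExponents n) (hk : k < n)
    (hbelow : ∀ j < k, ¬Active σ j) (hact : Active σ k) (heven : σ (gen (k + 1)) % 2 = 0) :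
    Q 0 (homotopy n (monomial σ 1)) + homotopy n (Q 0 (monomial σ 1)) = monomial σ 1 := by
  obtain ⟨hz, hke⟩ := eq_zero_of_forall_not_active hσ.1 hbelow
  have h2 : 2 ≤ σ (gen k) := hact.resolve_right (by omega)
  have hr := raise_mem_vnExponents hσ hk heven
  rw [homotopy_monomial, homotopyMonomial_eq hk hbelow hact, if_pos heven,
    Q_zero_monomial hr.1 hr.2.2, Q_zero_monomial hσ.1 hσ.2.2, map_sum,
    ← Finset.sum_add_distrib, Finset.sum_eq_single k]
  · rw [if_pos, if_neg (by omega), map_zero, add_zero, lower_raise h2]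
    simp only [raise_apply]; split_ifs <;> omega
  · intro j _ hjk
    rcases lt_or_gt_of_ne hjk with hjk | hkj
    · have hj : σ (gen (j + 1)) % 2 = 0 := by
        rcases (show j + 1 ≤ k by omega).lt_or_eq with h | h
        · rw [hz _ h]
        · subst h; exact hke
      rw [if_neg, if_neg (by omega), map_zero, add_zero]
      simp only [raise_apply]; split_ifs <;> omega
    · have hj : raise k σ (gen (j + 1)) = σ (gen (j + 1)) := by
        simp only [raise_apply]; split_ifs <;> omega
      rw [hj]
      split_ifs
      · rw [homotopy_monomial, homotopyMonomial_lower_of_lt hk hbelow hact hkj, if_pos heven,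
          lower_raise_comm σ hkj, CharTwo.add_self_eq_zero]
      · rw [map_zero, add_zero]
  · intro h; exact absurd (Finset.mem_range.mpr hk) h

lemma homotopy_identity_monomial (hσ : σ ∈ vnExponents n) :
    Q 0 (homotopy n (monomial σ 1)) + homotopy n (Q 0 (monomial σ 1)) +
      C (constantCoeff (monomial σ 1)) = monomial σ 1 := by
  classical
  by_cases hσ0 : σ = 0
  · subst hσ0
    simp only [homotopy_monomial, homotopyMonomial_zero]
    simp
  rw [constantCoeff_monomial, if_neg hσ0, C_0, add_zero]
  have h := exists_active hσ hσ0
  have hk := (Nat.find_spec h).1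
  have hbelow : ∀ j < Nat.find h, ¬Active σ j := fun j hj hj' =>
    Nat.find_min h hj ⟨hj.trans hk, hj'⟩
  by_cases heven : σ (gen (Nat.find h + 1)) % 2 = 0
  · exact Q_zero_homotopy_add_homotopy_Q_zero_of_even hσ hk hbelow (Nat.find_spec h).2 heven
  · rw [homotopy_monomial, homotopyMonomial_eq hk hbelow (Nat.find_spec h).2, if_neg heven,
      map_zero, zero_add, homotopy_Q_zero_of_odd hσ hk hbelow (by omega)]

lemma homotopy_identity {x : A} (hx : x ∈ restrictSupport F₂ (vnExponents n)) :
    Q 0 (homotopy n x) + homotopy n (Q 0 x) + C (constantCoeff x) = x := by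
  let L : A →ₗ[F₂] A := (Q 0).toLinearMap ∘ₗ homotopy n + homotopy n ∘ₗ (Q 0).toLinearMap +
    Algebra.linearMap F₂ A ∘ₗ lcoeff F₂ (0 : I →₀ ℕ)
  have hLapply : ∀ y, L y = Q 0 (homotopy n y) + homotopy n (Q 0 y) + C (constantCoeff y) :=
    fun y => rfl
  have hL : Set.EqOn L (LinearMap.id : A →ₗ[F₂] A) (restrictSupport F₂ (vnExponents n)) := by
    rw [restrictSupport_eq_span]
    refine LinearMap.eqOn_span' ?_
    rintro _ ⟨σ, hσ, rfl⟩
    rw [hLapply, LinearMap.id_apply]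
    exact homotopy_identity_monomial hσ
  rw [← hLapply, hL hx, LinearMap.id_apply]

lemma homotopy_mem {x : A} (hx : x ∈ restrictSupport F₂ (vnExponents n)) :
    homotopy n x ∈ restrictSupport F₂ (vnExponents n) := by
  classical
  rw [restrictSupport_eq_span] at hx
  refine (Submodule.map_span_le _ _ _).mpr ?_ (Submodule.mem_map_of_mem hx)
  rintro _ ⟨σ, hσ, rfl⟩
  rw [homotopy_monomial, homotopyMonomial]
  split_ifs with h heven
  · exact (monomial_mem_restrictSupport F₂).mpr
      (Or.inl (raise_mem_vnExponents hσ (Nat.find_spec h).1 heven))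
  all_goals exact zero_mem _

end Homotopy

/-- Corollary 2.21 (remaining cases): `H(z(n)/v_n; Q_0) ≅ F₂`, spanned by `1`, and
`H(z(n)/v_n; Q_m) ≅ H_*(z(n)/v_n)` for `m ≥ n + 1`. -/
theorem margolisHomology_zn_mod_vn_rest (n : ℕ) (hn : 1 ≤ n) :
    (¬ ∃ y ∈ Vn n, Q 0 y = 1) ∧
    (∀ x ∈ Vn n, Q 0 x = 0 → ∃ y ∈ Vn n, ∃ c : F₂, x = Q 0 y + c • (1 : A)) ∧
    (∀ m : ℕ, n + 1 ≤ m → ∀ x ∈ Vn n, Q m x = 0) := by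
  refine ⟨?_, ?_, fun m hm x hx => Q_eq_zero_of_mem_Vn hm hx⟩ <;>
    rw [Vn_eq_restrictSupport n hn]
  · rintro ⟨y, hy, hQ⟩
    simpa [hQ] using constantCoeff_Q_zero hy
  · intro x hx hQ
    refine ⟨homotopy n x, homotopy_mem hx, constantCoeff x, ?_⟩
    have h := homotopy_identity hx
    rw [hQ, map_zero, add_zero, ← mul_one (C _), ← smul_eq_C_mul] at h
    exact h.symm
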